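/- arXiv:1709.03269 — 9 statements merged into one kernel-verified Lean document; each statement's English description precedes it below -/
import Mathlib

section
/- A T₀-space (X, τ) is sup-sober if and only if τ coincides with its irreducibly-derived topology τ_SI. -/
universe u v w

open Set

/-- A preordered index type is a (nonempty) directed index set for nets. -/
def IsDirIdx (I : Type v) [Preorder I] : Prop :=
  Nonempty I ∧ ∀ i j : I, ∃ k, i ≤ k ∧ j ≤ k

/-- Convergence of a net with respect to a topology `t` on `X`. -/
def NetConv {X : Type u} (t : TopologicalSpace X) {I : Type v} [Preorder I]
    (net : I → X) (x : X) : Prop :=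
  ∀ U : Set X, t.IsOpen U → x ∈ U → ∃ k, ∀ i, k ≤ i → net i ∈ U

section
variable {X : Type u} [TopologicalSpace X]

/-- The specialisation order: `x ≤ y` iff `x ∈ cl {y}`. -/
def sLE (x y : X) : Prop := x ∈ closure ({y} : Set X)

/-- `b` is an upper bound of `A` in the specialisation order. -/
def IsUB (A : Set X) (b : X) : Prop := ∀ a ∈ A, sLE a b

/-- `s` is the supremum (least upper bound) of `A` in the specialisation order. -/
def IsSupSpec (A : Set X) (s : X) : Prop := IsUB A s ∧ ∀ b, IsUB A b → sLE s b

/-- The upper set `↑x` in the specialisation order. -/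
def upS (x : X) : Set X := {u | sLE x u}

/-- The lower set `↓A` in the specialisation order. -/
def downS (A : Set X) : Set X := {u | ∃ a ∈ A, sLE u a}

/-- The Irr-way-below relation: `x ≪_Irr y` iff every irreducible set `E`
whose supremum exists and dominates `y` meets `↑x`. -/
def wbIrr (x y : X) : Prop :=
  ∀ E : Set X, IsIrreducible E → ∀ s : X, IsSupSpec E s → sLE y s → (E ∩ upS x).Nonempty

/-- `↡x = {u | u ≪_Irr x}`. -/
def ddIrr (x : X) : Set X := {u | wbIrr u x}

/-- `↟x = {u | x ≪_Irr u}`. -/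
def uuIrr (x : X) : Set X := {u | wbIrr x u}

/-- A directed subset (w.r.t. the specialisation order): nonempty and every
pair of elements has an upper bound in the set. -/
def DirectedSub (D : Set X) : Prop :=
  D.Nonempty ∧ ∀ a ∈ D, ∀ b ∈ D, ∃ c ∈ D, sLE a c ∧ sLE b c

/-- `e` is an eventual lower bound of the net `net`. -/
def EvLB {I : Type v} [Preorder I] (net : I → X) (e : X) : Prop :=
  ∃ k, ∀ i, k ≤ i → sLE e (net i)

/-- Irr-convergence: the net `net` Irr-converges to `y` iff there is an
irreducible set `E` with a supremum `≥ y` consisting of eventual lower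
bounds of the net. -/
def IrrConv {I : Type v} [Preorder I] (net : I → X) (y : X) : Prop :=
  ∃ E : Set X, IsIrreducible E ∧ (∃ s, IsSupSpec E s ∧ sLE y s) ∧ ∀ e ∈ E, EvLB net e

end

/-- Sup-sobriety: every closed irreducible set having a supremum is the
closure of the singleton of its supremum. -/
def SupSober (X : Type u) [TopologicalSpace X] : Prop :=
  ∀ F : Set X, IsClosed F → IsIrreducible F → ∀ s : X, IsSupSpec F s → F = closure {s}

/-- `U` is open in the irreducibly-derived topology `τ_SI`. -/
def SIOpen {X : Type u} [TopologicalSpace X] (U : Set X) : Prop :=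
  IsOpen U ∧ ∀ E : Set X, IsIrreducible E → ∀ s : X, IsSupSpec E s → s ∈ U →
    (E ∩ U).Nonempty

/-- Interior with respect to the irreducibly-derived topology. -/
def SIint {X : Type u} [TopologicalSpace X] (A : Set X) : Set X :=
  ⋃₀ {U : Set X | SIOpen U ∧ U ⊆ A}

/-- Irr-continuity: every `↡x` is irreducible with supremum `x`. -/
def IrrCont (X : Type u) [TopologicalSpace X] : Prop :=
  ∀ x : X, IsIrreducible (ddIrr x) ∧ IsSupSpec (ddIrr x) x

/-- SI⁻-continuity: every `↡x` contains a directed subset with supremum `x`. -/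
def SImCont (X : Type u) [TopologicalSpace X] : Prop :=
  ∀ x : X, ∃ D : Set X, D ⊆ ddIrr x ∧ DirectedSub D ∧ IsSupSpec D x

/-- The `*`-property: for every irreducible `F` with a supremum there is a
directed subset of `↓F` with the same supremum. -/
def StarProp (X : Type u) [TopologicalSpace X] : Prop :=
  ∀ F : Set X, IsIrreducible F → ∀ s : X, IsSupSpec F s →
    ∃ D : Set X, D ⊆ downS F ∧ DirectedSub D ∧ IsSupSpec D s

/-- The `⊕`-property: every `↟x` is open. -/
def OplusProp (X : Type u) [TopologicalSpace X] : Prop :=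
  ∀ x : X, IsOpen (uuIrr x)

/-- C-space: for every open `U` and `x ∈ U` there is `y ∈ U` with
`x ∈ int (↑y)`. -/
def CSpace (X : Type u) [TopologicalSpace X] : Prop :=
  ∀ U : Set X, IsOpen U → ∀ x ∈ U, ∃ y ∈ U, x ∈ interior (upS y)

/-- The Irr-convergence class is topological: some topology induces it. -/
def IrrTopological (X : Type u) [TopologicalSpace X] : Prop :=
  ∃ t : TopologicalSpace X, ∀ (I : Type u) [Preorder I], IsDirIdx I →
    ∀ (net : I → X) (y : X), IrrConv net y ↔ NetConv t net y

/-- The family `τ_𝓘` of sets induced by the Irr-convergence class. -/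
def tauI (X : Type u) [TopologicalSpace X] : Set (Set X) :=
  {U | ∀ (I : Type u) [Preorder I], IsDirIdx I → ∀ (net : I → X) (y : X),
      IrrConv net y → y ∈ U → ∃ k, ∀ i, k ≤ i → net i ∈ U}

/-- Kelley's (Iterated limits) axiom for the Irr-convergence class. -/
def IterLimAxiom (X : Type u) [TopologicalSpace X] : Prop :=
  ∀ (I : Type u) [Preorder I], IsDirIdx I →
    ∀ (J : I → Type u) [∀ i, Preorder (J i)], (∀ i, IsDirIdx (J i)) →
      ∀ (xi : I → X) (xx : ∀ i, J i → X) (x : X),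
        IrrConv xi x → (∀ i, IrrConv (xx i) (xi i)) →
        IrrConv (fun p : I × (∀ i, J i) => xx p.1 (p.2 p.1)) x
/-- A T₀-space `(X, τ)` is sup-sober iff `τ` coincides with its
irreducibly-derived topology `τ_SI`. -/
theorem supSober_iff_SI_eq {X : Type u} [TopologicalSpace X] [T0Space X] :
    SupSober X ↔ ∀ U : Set X, IsOpen U ↔ SIOpen U := by
  constructor
  · intro hs U
    constructor
    · intro hU
      refine ⟨hU, ?_⟩
      intro E hE s hsup hsU
      have hsupc : IsSupSpec (closure E) s := by
        constructor
        · intro a ha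
          have hsub : closure E ⊆ closure ({s} : Set X) :=
            closure_minimal (fun e he => hsup.1 e he) isClosed_closure
          exact hsub ha
        · intro b hb
          exact hsup.2 b (fun a ha => hb a (subset_closure ha))
      have hcl := hs (closure E) isClosed_closure hE.closure s hsupc
      have hsmem : s ∈ closure E := by
        rw [hcl]; exact subset_closure rfl
      rcases (mem_closure_iff.mp hsmem) U hU hsU with ⟨x, hxU, hxE⟩
      exact ⟨x, hxE, hxU⟩
    · exact fun h => h.1
  · intro h F hFc hFi s hsup
    have hsF : s ∈ F := by
      by_contra hns
      have hSI := (h Fᶜ).mp hFc.isOpen_compl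
      rcases hSI.2 F hFi s hsup hns with ⟨x, hxF, hxc⟩
      exact hxc hxF
    apply Set.Subset.antisymm
    · exact fun a ha => hsup.1 a ha
    · exact closure_minimal (by simpa using hsF) hFc
end

section
/- Let X be an Irr-continuous T₀-space. Then for every x ∈ X, x is the supremum (in the specialisation order) of the set ⋃{↡y : y ≪_Irr x}, where ↡y = {u : u ≪_Irr y}. -/
universe u v w

open Set

lemma sLE_trans' {X : Type u} [TopologicalSpace X] {a b c : X}
    (h1 : sLE a b) (h2 : sLE b c) : sLE a c := by
  have : closure ({b} : Set X) ⊆ closure ({c} : Set X) := by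
    have := closure_mono (Set.singleton_subset_iff.mpr h2)
    simpa using this
  exact this h1

/-- in an Irr-continuous space every `x` is the supremum of
`⋃ {↡y : y ≪_Irr x}`. -/
theorem sup_iUnion_ddIrr {X : Type u} [TopologicalSpace X] [T0Space X]
    (hX : IrrCont X) (x : X) :
    IsSupSpec (⋃ y ∈ ddIrr x, ddIrr y) x := by
  constructor
  · intro u hu
    simp only [Set.mem_iUnion] at hu
    obtain ⟨y, hy, hu⟩ := hu
    exact sLE_trans' ((hX y).2.1 u hu) ((hX x).2.1 y hy)
  · intro b hb
    apply (hX x).2.2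
    intro y hy
    apply (hX y).2.2
    intro u hu
    exact hb u (Set.mem_iUnion.mpr ⟨y, Set.mem_iUnion.mpr ⟨hy, hu⟩⟩)
end

section
/- Let X be an Irr-continuous and sup-sober T₀-space. Then the relation ≪_Irr has the interpolation property: whenever z ≪_Irr x, there exists y ∈ X with z ≪_Irr y ≪_Irr x. -/
universe u v w

open Set

/-!
If `z ≪_Irr x`, test the definition of `≪_Irr` against `E = ⋃_{u ≪_Irr x} ↡u`. By Irr-continuity
`E` has supremum `x`, and by sup-sobriety every `u` lies in the closure of `↡u`, so `E` has the
same closure as `↡x` and is therefore irreducible. Hence some `w ≪_Irr u ≪_Irr x` lies above `z`,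
and `u` interpolates.
-/

section
variable {X : Type u} [TopologicalSpace X]

lemma sLE_iff_specializes {x y : X} : sLE x y ↔ y ⤳ x := specializes_iff_mem_closure.symm

lemma sLE_refl (x : X) : sLE x x := subset_closure rfl

lemma sLE.trans {x y z : X} (hxy : sLE x y) (hyz : sLE y z) : sLE x z :=
  sLE_iff_specializes.2 ((sLE_iff_specializes.1 hyz).trans (sLE_iff_specializes.1 hxy))

lemma isSupSpec_singleton (x : X) : IsSupSpec {x} x :=
  ⟨fun _ ha => ha ▸ sLE_refl x, fun _ hb => hb x rfl⟩

lemma IsSupSpec.closure {A : Set X} {s : X} (h : IsSupSpec A s) : IsSupSpec (closure A) s :=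
  ⟨fun _ ha => closure_minimal h.1 isClosed_closure ha,
    fun b hb => h.2 b fun a ha => hb a (subset_closure ha)⟩

lemma IsSupSpec.biUnion {A : Set X} {B : X → Set X} {s : X} (hA : IsSupSpec A s)
    (hB : ∀ a ∈ A, IsSupSpec (B a) a) : IsSupSpec (⋃ a ∈ A, B a) s := by
  constructor
  · intro e he
    obtain ⟨a, ha, heB⟩ := mem_iUnion₂.1 he
    exact ((hB a ha).1 e heB).trans (hA.1 a ha)
  · intro b hb
    exact hA.2 b fun a ha => (hB a ha).2 b fun e he => hb e (mem_biUnion ha he)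

lemma IsIrreducible.of_closure_eq {A B : Set X} (hA : IsIrreducible A)
    (hAB : closure A = closure B) : IsIrreducible B :=
  isIrreducible_iff_closure.1 (hAB ▸ hA.closure)

lemma wbIrr.le {w x : X} (h : wbIrr w x) : sLE w x := by
  obtain ⟨v, rfl, hwv⟩ := h {x} isIrreducible_singleton x (isSupSpec_singleton x) (sLE_refl x)
  exact hwv

lemma wbIrr.of_sLE_left {z w x : X} (hzw : sLE z w) (h : wbIrr w x) : wbIrr z x := by
  intro E hE s hsup hxs
  obtain ⟨v, hvE, hwv⟩ := h E hE s hsup hxs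
  exact ⟨v, hvE, hzw.trans hwv⟩

lemma SupSober.mem_closure (hs : SupSober X) {A : Set X} {s : X} (hA : IsIrreducible A)
    (hsup : IsSupSpec A s) : s ∈ closure A := by
  rw [hs _ isClosed_closure hA.closure s hsup.closure]
  exact subset_closure rfl

lemma IrrCont.isSupSpec_biUnion_ddIrr (hX : IrrCont X) (x : X) :
    IsSupSpec (⋃ u ∈ ddIrr x, ddIrr u) x :=
  (hX x).2.biUnion fun u _ => (hX u).2

lemma IrrCont.closure_biUnion_ddIrr (hX : IrrCont X) (hs : SupSober X) (x : X) :
    closure (⋃ u ∈ ddIrr x, ddIrr u) = closure (ddIrr x) := by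
  apply (closure_minimal _ isClosed_closure).antisymm (closure_minimal _ isClosed_closure)
  · refine iUnion₂_subset fun u hu w hw => ?_
    exact closure_mono (singleton_subset_iff.2 hu) hw.le
  · intro u hu
    exact closure_mono (subset_biUnion_of_mem (u := ddIrr) hu)
      (hs.mem_closure (hX u).1 (hX u).2)

lemma IrrCont.isIrreducible_biUnion_ddIrr (hX : IrrCont X) (hs : SupSober X) (x : X) :
    IsIrreducible (⋃ u ∈ ddIrr x, ddIrr u) :=
  (hX x).1.of_closure_eq (hX.closure_biUnion_ddIrr hs x).symm

end

theorem wbIrr_interpolation_of_irrCont_general {X : Type u} [TopologicalSpace X]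
    (hX : IrrCont X) (hs : SupSober X) (z x : X) (hzx : wbIrr z x) :
    ∃ y : X, wbIrr z y ∧ wbIrr y x := by
  obtain ⟨w, hwE, hzw⟩ := hzx _ (hX.isIrreducible_biUnion_ddIrr hs x) x
    (hX.isSupSpec_biUnion_ddIrr x) (sLE_refl x)
  obtain ⟨u, hux, hwu⟩ := mem_iUnion₂.1 hwE
  exact ⟨u, wbIrr.of_sLE_left hzw hwu, hux⟩

/-- interpolation in Irr-continuous sup-sober spaces. -/
theorem wbIrr_interpolation_of_irrCont {X : Type u} [TopologicalSpace X] [T0Space X]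
    (hX : IrrCont X) (hs : SupSober X) (z x : X) (hzx : wbIrr z x) :
    ∃ y : X, wbIrr z y ∧ wbIrr y x :=
  wbIrr_interpolation_of_irrCont_general hX hs z x hzx
end

section
/- Every Irr-continuous T₀-space satisfying the *-property is SI⁻-continuous. -/
universe u v w

open Set

/-- Irr-continuous + *-property implies SI⁻-continuous. -/
theorem sImCont_of_irrCont_starProp {X : Type u} [TopologicalSpace X] [T0Space X]
    (h1 : IrrCont X) (h2 : StarProp X) : SImCont X := by
  intro x
  obtain ⟨hirr, hsup⟩ := h1 x
  obtain ⟨D, hD, hdir, hDsup⟩ := h2 (ddIrr x) hirr x hsup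
  refine ⟨D, ?_, hdir, hDsup⟩
  intro u hu
  obtain ⟨v, hv, huv⟩ := hD hu
  intro E hE s hs hxs
  obtain ⟨e, heE, hev⟩ := hv E hE s hs hxs
  refine ⟨e, heE, ?_⟩
  have hsub : closure ({v} : Set X) ⊆ closure ({e} : Set X) :=
    closure_minimal (Set.singleton_subset_iff.mpr (hev : v ∈ closure ({e} : Set X)))
      isClosed_closure
  exact hsub huv
end

section
/- Every SI⁻-continuous sup-sober T₀-space satisfies the *-property. -/
universe u v w

open Set

/-- SI⁻-continuous + sup-sober implies the *-property. -/
theorem starProp_of_sImCont_supSober {X : Type u} [TopologicalSpace X] [T0Space X]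
    (h1 : SImCont X) (h2 : SupSober X) : StarProp X := by
  intro F hF s hs
  obtain ⟨D, hD1, hD2, hD3⟩ := h1 s
  refine ⟨D, ?_, hD2, hD3⟩
  intro u hu
  obtain ⟨f, hfF, hfu⟩ := hD1 hu F hF s hs (subset_closure rfl)
  exact ⟨f, hfF, hfu⟩
end

section
/- If X is an Irr⁺-continuous sup-sober T₀-space (i.e., X is Irr-continuous, sup-sober, and ↟x = {u : x ≪_Irr u} is open for every x), then X is a C-space. -/
universe u v w

open Set

/-- Irr⁺-continuous sup-sober spaces are C-spaces. -/
theorem cSpace_of_irrContPlus_supSober {X : Type u} [TopologicalSpace X] [T0Space X]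
    (h1 : IrrCont X) (h2 : SupSober X) (h3 : OplusProp X) : CSpace X := by
  have hrefl : ∀ a : X, sLE a a := fun a => subset_closure rfl
  intro U hU x hxU
  obtain ⟨hirr, hsup⟩ := h1 x
  -- ↡x meets U
  have hmeet : (ddIrr x ∩ U).Nonempty := by
    by_contra hne
    have hsubC : ddIrr x ⊆ Uᶜ := by
      intro a ha
      intro haU
      exact hne ⟨a, ha, haU⟩
    have hclsub : closure (ddIrr x) ⊆ Uᶜ :=
      closure_minimal hsubC hU.isClosed_compl
    have hsupcl : IsSupSpec (closure (ddIrr x)) x := by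
      constructor
      · intro a ha
        have : ddIrr x ⊆ closure ({x} : Set X) := fun b hb => hsup.1 b hb
        exact closure_minimal this isClosed_closure ha
      · intro b hb
        exact hsup.2 b (fun a ha => hb a (subset_closure ha))
    have := h2 (closure (ddIrr x)) isClosed_closure hirr.closure x hsupcl
    have hxin : x ∈ closure (ddIrr x) := this ▸ hrefl x
    exact hclsub hxin hxU
  obtain ⟨y, hyd, hyU⟩ := hmeet
  refine ⟨y, hyU, ?_⟩
  have hsub : uuIrr y ⊆ upS y := by
    intro z hz
    have hzirr : IsIrreducible ({z} : Set X) := isIrreducible_singleton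
    have hzsup : IsSupSpec ({z} : Set X) z := by
      constructor
      · intro a ha; rw [Set.mem_singleton_iff] at ha; subst ha; exact hrefl a
      · intro b hb; exact hb z rfl
    obtain ⟨w, hw1, hw2⟩ := hz {z} hzirr z hzsup (hrefl z)
    rw [Set.mem_singleton_iff] at hw1; subst hw1; exact hw2
  exact interior_maximal hsub (h3 y) hyd
end

section
/- Let X be a T₀-space, (x_i)_{i∈I} a net in X, and y ∈ X. If (x_i) Irr-converges to y, then for every x with x ≪_Irr y, x is an eventual lower bound of (x_i) (i.e., there is k ∈ I such that x_i ≥ x for all i ≥ k). Moreover, if X is Irr-continuous or SI⁻-continuous, the converse holds: if every x ≪_Irr y is an eventual lower bound of (x_i), then (x_i) Irr-converges to y. -/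
universe u v w

open Set

lemma directed_irreducible {X : Type u} [TopologicalSpace X] {D : Set X}
    (hD : DirectedSub D) : IsIrreducible D := by
  obtain ⟨hne, hdir⟩ := hD
  refine ⟨hne, fun u v hu hv ⟨a, haD, hau⟩ ⟨b, hbD, hbv⟩ => ?_⟩
  obtain ⟨c, hcD, hac, hbc⟩ := hdir a haD b hbD
  have hcu : c ∈ u := by
    have := mem_closure_iff.1 hac u hu hau
    simpa using this
  have hcv : c ∈ v := by
    have := mem_closure_iff.1 hbc v hv hbv
    simpa using this
  exact ⟨c, hcD, hcu, hcv⟩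

/-- characterisation of `≪_Irr` via Irr-convergence. -/
theorem irrConv_evLB {X : Type u} [TopologicalSpace X] [T0Space X]
    {I : Type v} [Preorder I] (hI : IsDirIdx I) (net : I → X) (y : X) :
    (IrrConv net y → ∀ x : X, wbIrr x y → EvLB net x) ∧
    ((IrrCont X ∨ SImCont X) →
      (∀ x : X, wbIrr x y → EvLB net x) → IrrConv net y) := by
  constructor
  · rintro ⟨E, hE, ⟨s, hs, hys⟩, hev⟩ x hx
    obtain ⟨e, heE, hxe⟩ := hx E hE s hs hys
    obtain ⟨k, hk⟩ := hev e heE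
    exact ⟨k, fun i hi => sLE_trans' hxe (hk i hi)⟩
  · rintro (hcont | hcont) hlb
    · obtain ⟨hirr, hsup⟩ := hcont y
      exact ⟨ddIrr y, hirr, ⟨y, hsup, subset_closure rfl⟩, fun e he => hlb e he⟩
    · obtain ⟨D, hDsub, hDdir, hDsup⟩ := hcont y
      exact ⟨D, directed_irreducible hDdir, ⟨y, hDsup, subset_closure rfl⟩,
        fun e he => hlb e (hDsub he)⟩
end

section
/- If X is an Irr-continuous or SI⁻-continuous T₀-space, then the Irr-convergence class 𝓘 satisfies Kelley's (Divergence) axiom: if a net (x_i) does not Irr-converge to x, then it has a subnet no subnet of which Irr-converges to x. -/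
universe u v w

open Set

/-!
Pick an irreducible `B ⊆ ↡x` with supremum `x` (in the SI⁻-continuous case a directed one,
and directed sets are irreducible). If `net` does not Irr-converge to `x`, some `e₀ ∈ B` is
not an eventual lower bound of it, so the indices `i` with `e₀ ≰ net i` are cofinal and form
a subnet. Any net Irr-converging to `x` eventually lies above every element way below `x`,
in particular above `e₀`; no subnet of that subnet can do so.
-/

section Specialisation

variable {X : Type u} [TopologicalSpace X]

lemma sLE_trans {a b c : X} (hab : sLE a b) (hbc : sLE b c) : sLE a c :=
  closure_minimal (singleton_subset_iff.mpr hbc) isClosed_closure hab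

lemma IsOpen.mem_of_sLE {U : Set X} (hU : IsOpen U) {a c : X} (ha : a ∈ U) (hac : sLE a c) :
    c ∈ U := by
  obtain ⟨z, hz, rfl⟩ := mem_closure_iff.mp hac U hU ha
  exact hz

lemma DirectedSub.isIrreducible {D : Set X} (hD : DirectedSub D) : IsIrreducible D := by
  refine ⟨hD.1, fun U V hU hV ⟨a, haD, haU⟩ ⟨b, hbD, hbV⟩ => ?_⟩
  obtain ⟨c, hcD, hac, hbc⟩ := hD.2 a haD b hbD
  exact ⟨c, hcD, hU.mem_of_sLE haU hac, hV.mem_of_sLE hbV hbc⟩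

lemma exists_isIrreducible_subset_ddIrr_isSupSpec (hX : IrrCont X ∨ SImCont X) (x : X) :
    ∃ B : Set X, IsIrreducible B ∧ B ⊆ ddIrr x ∧ IsSupSpec B x := by
  rcases hX with hX | hX
  · exact ⟨ddIrr x, (hX x).1, subset_rfl, (hX x).2⟩
  · obtain ⟨D, hDsub, hDdir, hDsup⟩ := hX x
    exact ⟨D, hDdir.isIrreducible, hDsub, hDsup⟩

variable {I : Type v} [Preorder I] {net : I → X} {x : X}

lemma IrrConv.evLB_of_wbIrr (hconv : IrrConv net x) {e : X} (he : wbIrr e x) : EvLB net e := by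
  obtain ⟨E, hEirr, ⟨s, hEsup, hxs⟩, hEev⟩ := hconv
  obtain ⟨e', he'E, hee'⟩ := he E hEirr s hEsup hxs
  obtain ⟨k, hk⟩ := hEev e' he'E
  exact ⟨k, fun i hi => sLE_trans hee' (hk i hi)⟩

lemma exists_not_evLB_of_not_irrConv {B : Set X} (hB : IsIrreducible B) (hBsup : IsSupSpec B x)
    (hnc : ¬ IrrConv net x) : ∃ e ∈ B, ¬ EvLB net e := by
  by_contra! h
  exact hnc ⟨B, hB, ⟨x, hBsup, sLE_refl x⟩, h⟩

end Specialisation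

section CofinalSubtype

variable {I : Type v} [Preorder I] {P : I → Prop}

lemma isDirIdx_subtype_of_cofinal (hI : IsDirIdx I) (hP : ∀ k, ∃ i, k ≤ i ∧ P i) :
    IsDirIdx {i // P i} := by
  refine ⟨?_, fun a b => ?_⟩
  · obtain ⟨i₀⟩ := hI.1
    obtain ⟨i, -, hi⟩ := hP i₀
    exact ⟨⟨i, hi⟩⟩
  · obtain ⟨k, hak, hbk⟩ := hI.2 a b
    obtain ⟨i, hki, hi⟩ := hP k
    exact ⟨⟨i, hi⟩, hak.trans hki, hbk.trans hki⟩

lemma exists_forall_le_val_of_cofinal (hP : ∀ k, ∃ i, k ≤ i ∧ P i) (i : I) :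
    ∃ j₀ : {i // P i}, ∀ j, j₀ ≤ j → i ≤ j.val := by
  obtain ⟨i', hii', hi'⟩ := hP i
  exact ⟨⟨i', hi'⟩, fun j hj => hii'.trans hj⟩

end CofinalSubtype

theorem irrConv_divergence_general {X : Type u} [TopologicalSpace X]
    (hX : IrrCont X ∨ SImCont X)
    {I : Type v} [Preorder I] (hI : IsDirIdx I) (net : I → X) (x : X)
    (hnc : ¬ IrrConv net x) :
    ∃ (J : Type v) (pJ : Preorder J) (g : J → I),
      @IsDirIdx J pJ ∧
      (∀ i : I, ∃ j0 : J, ∀ j : J, pJ.le j0 j → i ≤ g j) ∧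
      (∀ (K : Type w) (pK : Preorder K), @IsDirIdx K pK →
        ∀ h : K → J, (∀ j : J, ∃ k0 : K, ∀ k : K, pK.le k0 k → pJ.le j (h k)) →
          ¬ @IrrConv X _ K pK (fun k => net (g (h k))) x) := by
  obtain ⟨B, hBirr, hBsub, hBsup⟩ := exists_isIrreducible_subset_ddIrr_isSupSpec hX x
  obtain ⟨e₀, he₀B, he₀⟩ := exists_not_evLB_of_not_irrConv hBirr hBsup hnc
  have hcofinal : ∀ k, ∃ i, k ≤ i ∧ ¬ sLE e₀ (net i) := by
    simpa [EvLB] using he₀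
  refine ⟨{i // ¬ sLE e₀ (net i)}, inferInstance, Subtype.val,
    isDirIdx_subtype_of_cofinal hI hcofinal, exists_forall_le_val_of_cofinal hcofinal, ?_⟩
  intro K pK _ h _ hconv
  obtain ⟨k, hk⟩ := hconv.evLB_of_wbIrr (hBsub he₀B)
  exact (h k).2 (hk k le_rfl)

/-- the (Divergence) axiom in Irr-continuous or SI⁻-continuous
spaces. -/
theorem irrConv_divergence {X : Type u} [TopologicalSpace X] [T0Space X]
    (hX : IrrCont X ∨ SImCont X)
    {I : Type v} [Preorder I] (hI : IsDirIdx I) (net : I → X) (x : X)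
    (hnc : ¬ IrrConv net x) :
    ∃ (J : Type v) (pJ : Preorder J) (g : J → I),
      @IsDirIdx J pJ ∧
      (∀ i : I, ∃ j0 : J, ∀ j : J, pJ.le j0 j → i ≤ g j) ∧
      (∀ (K : Type w) (pK : Preorder K), @IsDirIdx K pK →
        ∀ h : K → J, (∀ j : J, ∃ k0 : K, ∀ k : K, pK.le k0 k → pJ.le j (h k)) →
          ¬ @IrrConv X _ K pK (fun k => net (g (h k))) x) :=
  irrConv_divergence_general hX hI net x hnc
end

section
/- Let X be a sup-sober T₀-space and x ∈ X. If E is an irreducible subset of X such that ⋁E exists, ⋁E ≥ x, and E ⊆ ↡x, then ↡x itself is irreducible in X and ⋁↡x = x. -/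
universe u v w

open Set

/-- in a sup-sober space, if an irreducible `E ⊆ ↡x` has a
supremum `≥ x`, then `↡x` is irreducible with supremum `x`. -/
theorem ddIrr_irreducible_of_subset {X : Type u} [TopologicalSpace X] [T0Space X]
    (hs : SupSober X) (x : X) (E : Set X) (hE : IsIrreducible E)
    (s : X) (hsup : IsSupSpec E s) (hxs : sLE x s) (hsub : E ⊆ ddIrr x) :
    IsIrreducible (ddIrr x) ∧ IsSupSpec (ddIrr x) x := by
  have hrefl : ∀ a : X, sLE a a := fun a => subset_closure rfl
  have htrans : ∀ a b c : X, sLE a b → sLE b c → sLE a c := by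
    intro a b c hab hbc
    exact closure_minimal (singleton_subset_iff.mpr hbc) isClosed_closure hab
  -- opens are upper sets
  have hup : ∀ U : Set X, IsOpen U → ∀ a b : X, sLE a b → a ∈ U → b ∈ U := by
    intro U hU a b hab haU
    rcases (mem_closure_iff.mp hab) U hU haU with ⟨c, hcU, hc⟩
    rcases hc with rfl
    exact hcU
  -- cl {x} is irreducible with sup x
  have hclx : IsSupSpec (closure ({x} : Set X)) x := by
    constructor
    · intro a ha; exact ha
    · intro b hb; exact hb x (subset_closure rfl)
  -- x is an upper bound of ddIrr x
  have hubx : IsUB (ddIrr x) x := by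
    intro u hu
    rcases hu (closure ({x} : Set X)) (isIrreducible_singleton.closure) x hclx
      (hrefl x) with ⟨v, hv, huv⟩
    exact htrans u v x huv hv
  have hEx : E ⊆ ddIrr x := hsub
  have hne : (ddIrr x).Nonempty := hE.1.mono hsub
  refine ⟨⟨hne, ?_⟩, hubx, ?_⟩
  · intro U V hU hV ⟨u, huD, huU⟩ ⟨v, hvD, hvV⟩
    rcases huD E hE s hsup hxs with ⟨e₁, he₁E, he₁⟩
    rcases hvD E hE s hsup hxs with ⟨e₂, he₂E, he₂⟩
    have hEU : (E ∩ U).Nonempty := ⟨e₁, he₁E, hup U hU u e₁ he₁ huU⟩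
    have hEV : (E ∩ V).Nonempty := ⟨e₂, he₂E, hup V hV v e₂ he₂ hvV⟩
    rcases hE.2 U V hU hV hEU hEV with ⟨e, heE, heU, heV⟩
    exact ⟨e, hsub heE, heU, heV⟩
  · intro b hb
    have hsb : sLE s b := hsup.2 b fun a ha => hb a (hsub ha)
    exact htrans x s b hxs hsb
end
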